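/- Let k be a positive integer, λ = (λ_1,…,λ_n) a k-bounded partition, and D = D(λ) = λ_1 ×^{(k)} ⋯ ×^{(k)} λ_n. If D̄ is a skew diagram obtained from D by shifting one of its rows to the left (keeping the row's length), and the number of columns of D̄ is not more than the number of columns of D, then D̄ contains a cell of hook-length strictly greater than k (i.e. the hook-lengths of D̄ are not bounded by k). -/

import Mathlib

/-- A partition: a weakly decreasing list of positive integers
(parts listed from largest to smallest). -/
def IsPartitionList (l : List ℕ) : Prop :=
  l.Pairwise (· ≥ ·) ∧ ∀ x ∈ l, 0 < x

/-- A `k`-bounded partition: a partition all of whose parts are at most `k`. -/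
def IsKBoundedPartition (k : ℕ) (l : List ℕ) : Prop :=
  IsPartitionList l ∧ ∀ x ∈ l, x ≤ k

/-- Row `i` of a diagram whose rows (listed bottom-to-top) are encoded as
(start column, length) pairs. -/
def rowOf (D : List (ℕ × ℕ)) (i : ℕ) : ℕ × ℕ := D.getD i (0, 0)

/-- `D` encodes a skew diagram (a difference of Young diagrams, rows listed from
bottom to top): all rows are nonempty and, going up, both the left ends and the
right ends of the rows move weakly to the left. -/
def IsSkewRows (D : List (ℕ × ℕ)) : Prop :=
  (∀ r ∈ D, 0 < r.2) ∧
  D.Chain' fun r r' => r'.1 ≤ r.1 ∧ r'.1 + r'.2 ≤ r.1 + r.2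

/-- Cell in row `i` (from the bottom), column `j`, belongs to the diagram `D`. -/
def InDiag (D : List (ℕ × ℕ)) (i j : ℕ) : Prop :=
  i < D.length ∧ (rowOf D i).1 ≤ j ∧ j < (rowOf D i).1 + (rowOf D i).2

/-- The arm of a cell: the number of cells of `D` strictly to its east. -/
def armLen (D : List (ℕ × ℕ)) (i j : ℕ) : ℕ :=
  (rowOf D i).1 + (rowOf D i).2 - 1 - j

/-- The leg of a cell: the number of cells of `D` strictly to its north. -/
def legLen (D : List (ℕ × ℕ)) (i j : ℕ) : ℕ :=
  ((Finset.range D.length).filter fun i' =>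
    i < i' ∧ (rowOf D i').1 ≤ j ∧ j < (rowOf D i').1 + (rowOf D i').2).card

/-- The hook-length of a cell of `D`. -/
def hookLen (D : List (ℕ × ℕ)) (i j : ℕ) : ℕ := armLen D i j + legLen D i j + 1

/-- All hook-lengths of `D` are at most `k`. -/
def HookBounded (k : ℕ) (D : List (ℕ × ℕ)) : Prop :=
  ∀ i j, InDiag D i j → hookLen D i j ≤ k

/-- Shift `D` one column to the right and adjoin a new column of `m` cells in
column `0`, occupying the `m` consecutive rows `h, …, h + m - 1`. -/
def addCol (m h : ℕ) (D : List (ℕ × ℕ)) : List (ℕ × ℕ) :=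
  (List.range (max D.length (h + m))).map fun i =>
    if h ≤ i ∧ i < h + m then
      if i < D.length then (0, (rowOf D i).1 + (rowOf D i).2 + 1) else (0, 1)
    else ((rowOf D i).1 + 1, (rowOf D i).2)

/-- The placement of the new column at height `h` yields a genuine skew diagram
(rows stay contiguous) whose hook-lengths are bounded by `k`. -/
def ColValid (k m h : ℕ) (D : List (ℕ × ℕ)) : Prop :=
  (∀ i, h ≤ i → i < h + m → i < D.length → (rowOf D i).1 = 0) ∧
  IsSkewRows (addCol m h D) ∧ HookBounded k (addCol m h D)

/-- `k`-multiplication `m ×^{(k)} D`: adjoin a first column of length `m` to `D`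
so that the result is a skew diagram with hook-lengths bounded by `k`, having as
few rows as possible (the valid placement heights `h` all satisfy
`h + m ≥ number of rows`, so the lowest valid placement has fewest rows). -/
noncomputable def kMul (k m : ℕ) (D : List (ℕ × ℕ)) : List (ℕ × ℕ) :=
  addCol m (sInf {h | ColValid k m h D}) D

/-- `D(λ)`: the skew diagram obtained by `k`-multiplying the parts of `λ` from
right to left, the innermost part giving a single column. -/
noncomputable def kSkewDiagram (k : ℕ) : List ℕ → List (ℕ × ℕ)
  | [] => []
  | m :: rest => kMul k m (kSkewDiagram k rest)

/-- The `k`-conjugate `λ^{ω_k}`: the row lengths of `D(λ)`, read from the bottom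
row to the top row. -/
noncomputable def kConjugate (k : ℕ) (l : List ℕ) : List ℕ :=
  (kSkewDiagram k l).map Prod.snd

/-- The set of columns occupied by at least one cell of `D`. -/
def colsOf (D : List (ℕ × ℕ)) : Finset ℕ :=
  D.foldr (fun r s => Finset.Ico r.1 (r.1 + r.2) ∪ s) ∅

/-!
Induction on `λ`. Write `D(λ) = addCol m h D`, where `D = D(λ₂, …)`, `m = λ₁` and `h` is the
lowest valid height. A row `r` that can move left lies below the new column, so it is row `r` of
`D` moved one step right. If the shifted row stays off column `0`, deleting column `0` turns the
shifted `D(λ)` into a shifted `D` with the same hook-lengths, and induction applies. If it reaches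
column `0`, skewness forces `h = r + 1`, and the hook of its first cell shows that the length of
row `r` plus `m` is at most `k`. Then either row `r` of `D` already started in column `0`, and the
new column could have been placed at height `r` (the first column of `D` has at most `λ₂ ≤ m`
cells), contradicting the minimality of `h`; or moving row `r` of `D` itself to column `0` gives
again a skew diagram with hook-lengths bounded by `k`, and induction applies.
-/

section Legs

variable {D D₁ D₂ : List (ℕ × ℕ)} {i j i₁ i₂ j₁ j₂ : ℕ}

lemma legLen_le_legLen (H : ∀ i, i₁ < i → InDiag D₁ i j₁ → i₂ < i ∧ InDiag D₂ i j₂) :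
    legLen D₁ i₁ j₁ ≤ legLen D₂ i₂ j₂ := by
  refine Finset.card_le_card fun i hi => ?_
  simp only [Finset.mem_filter, Finset.mem_range] at hi ⊢
  obtain ⟨h₁, h₂, h₃⟩ := H i hi.2.1 ⟨hi.1, hi.2.2⟩
  exact ⟨h₂, h₁, h₃⟩

lemma legLen_congr (H : ∀ i, i₁ < i ∧ InDiag D₁ i j₁ ↔ i₂ < i ∧ InDiag D₂ i j₂) :
    legLen D₁ i₁ j₁ = legLen D₂ i₂ j₂ :=
  le_antisymm (legLen_le_legLen fun i h₁ h₂ => (H i).1 ⟨h₁, h₂⟩)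
    (legLen_le_legLen fun i h₁ h₂ => (H i).2 ⟨h₁, h₂⟩)

lemma legLen_eq_sub {a b : ℕ} (H : ∀ i', i < i' ∧ InDiag D i' j ↔ a ≤ i' ∧ i' < b) :
    legLen D i j = b - a := by
  rw [legLen, ← Nat.card_Ico a b]
  congr 1
  ext i'
  simp only [Finset.mem_filter, Finset.mem_range, Finset.mem_Ico, ← H i', InDiag]
  tauto

end Legs

section Rows

variable {D : List (ℕ × ℕ)} {i j r s : ℕ} {p : ℕ × ℕ}

lemma rowOf_of_length_le (h : D.length ≤ i) : rowOf D i = (0, 0) := by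
  simp [rowOf, List.getD_eq_getElem?_getD, List.getElem?_eq_none h]

lemma rowOf_eq_getElem (h : i < D.length) : rowOf D i = D[i] := by
  simp [rowOf, List.getD_eq_getElem?_getD, h]

lemma rowOf_set_self (h : r < D.length) : rowOf (D.set r p) r = p := by
  simp [rowOf, List.getD_eq_getElem?_getD, h]

lemma rowOf_set_of_ne (h : i ≠ r) : rowOf (D.set r p) i = rowOf D i := by
  simp [rowOf, List.getD_eq_getElem?_getD, Ne.symm h]

lemma lt_length_of_lt_rowOf_fst (h : s < (rowOf D i).1) : i < D.length := by
  by_contra! hi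
  simp [rowOf_of_length_le hi] at h

lemma inDiag_set_self (h : r < D.length) : InDiag (D.set r p) r j ↔ p.1 ≤ j ∧ j < p.1 + p.2 := by
  simp [InDiag, rowOf_set_self h, h]

lemma inDiag_set_of_ne (h : i ≠ r) : InDiag (D.set r p) i j ↔ InDiag D i j := by
  simp [InDiag, rowOf_set_of_ne h]

lemma hookLen_set_of_lt (h : r < i) : hookLen (D.set r p) i j = hookLen D i j := by
  have hleg : legLen (D.set r p) i j = legLen D i j :=
    legLen_congr fun i' => and_congr_right fun hi' => inDiag_set_of_ne (by omega)
  simp only [hookLen, armLen, hleg, rowOf_set_of_ne h.ne']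

lemma isSkewRows_iff : IsSkewRows D ↔
    (∀ i < D.length, 0 < (rowOf D i).2) ∧
    ∀ i, i + 1 < D.length → (rowOf D (i + 1)).1 ≤ (rowOf D i).1 ∧
      (rowOf D (i + 1)).1 + (rowOf D (i + 1)).2 ≤ (rowOf D i).1 + (rowOf D i).2 := by
  rw [IsSkewRows, List.Chain', List.isChain_iff_getElem, List.forall_mem_iff_getElem]
  refine and_congr (forall_congr' fun i => ?_) (forall_congr' fun i => ?_)
  · exact ⟨fun h hi => by simpa [rowOf_eq_getElem hi] using h hi,
      fun h hi => by simpa [rowOf_eq_getElem hi] using h hi⟩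
  · exact ⟨fun h hi => by
        simpa [rowOf_eq_getElem hi, rowOf_eq_getElem (Nat.lt_of_succ_lt hi)] using h hi,
      fun h hi => by
        simpa [rowOf_eq_getElem hi, rowOf_eq_getElem (Nat.lt_of_succ_lt hi)] using h hi⟩

lemma IsSkewRows.pos (hD : IsSkewRows D) (hi : i < D.length) : 0 < (rowOf D i).2 :=
  (isSkewRows_iff.1 hD).1 i hi

lemma IsSkewRows.antitone (hD : IsSkewRows D) (hij : i ≤ j) (hj : j < D.length) :
    (rowOf D j).1 ≤ (rowOf D i).1 ∧
      (rowOf D j).1 + (rowOf D j).2 ≤ (rowOf D i).1 + (rowOf D i).2 := by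
  induction j, hij using Nat.le_induction with
  | base => exact ⟨le_rfl, le_rfl⟩
  | succ j _ ih =>
    have := (isSkewRows_iff.1 hD).2 j hj
    have := ih (by omega)
    omega

lemma IsSkewRows.set (hD : IsSkewRows D) (hp : 0 < p.2)
    (hbelow : 0 < r → p.1 ≤ (rowOf D (r - 1)).1 ∧
      p.1 + p.2 ≤ (rowOf D (r - 1)).1 + (rowOf D (r - 1)).2)
    (habove : r + 1 < D.length → (rowOf D (r + 1)).1 ≤ p.1 ∧
      (rowOf D (r + 1)).1 + (rowOf D (r + 1)).2 ≤ p.1 + p.2) :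
    IsSkewRows (D.set r p) := by
  rw [isSkewRows_iff] at hD ⊢
  simp only [List.length_set]
  refine ⟨fun i hi => ?_, fun i hi => ?_⟩
  · rcases eq_or_ne i r with rfl | hir
    · rwa [rowOf_set_self hi]
    · rw [rowOf_set_of_ne hir]; exact hD.1 i hi
  · rcases eq_or_ne (i + 1) r with rfl | hir
    · rw [rowOf_set_self hi, rowOf_set_of_ne (by omega)]; exact hbelow (by omega)
    rcases eq_or_ne i r with rfl | hir'
    · rw [rowOf_set_self (by omega), rowOf_set_of_ne hir]; exact habove hi
    · rw [rowOf_set_of_ne hir, rowOf_set_of_ne hir']; exact hD.2 i hi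

end Rows

section ColumnShift

variable {F G : List (ℕ × ℕ)}

lemma rowOf_of_inDiag_succ_iff {i j₀ : ℕ} (hc : ∀ j, InDiag F i (j + 1) ↔ InDiag G i j)
    (hG : InDiag G i j₀) :
    (rowOf G i).1 = (rowOf F i).1 - 1 ∧
      (rowOf G i).1 + (rowOf G i).2 + 1 = (rowOf F i).1 + (rowOf F i).2 := by
  have e₁ := hc (rowOf G i).1
  have e₂ := hc ((rowOf G i).1 + (rowOf G i).2 - 1)
  have e₃ := hc ((rowOf G i).1 + (rowOf G i).2)
  have e₄ := hc ((rowOf G i).1 - 1)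
  simp only [InDiag] at hG e₁ e₂ e₃ e₄
  omega

variable (hc : ∀ i j, InDiag F i (j + 1) ↔ InDiag G i j)
include hc

lemma hookLen_eq_of_inDiag_succ_iff {i j : ℕ} (hG : InDiag G i j) :
    hookLen G i j = hookLen F i (j + 1) := by
  have hrow := rowOf_of_inDiag_succ_iff (hc i) hG
  have hleg : legLen G i j = legLen F i (j + 1) := legLen_congr fun i' => by rw [hc]
  obtain ⟨-, h₁, h₂⟩ := hG
  simp only [hookLen, armLen, hleg]
  omega

lemma HookBounded.of_inDiag_succ_iff {k : ℕ} (hF : HookBounded k F) : HookBounded k G :=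
  fun i j hG => (hookLen_eq_of_inDiag_succ_iff hc hG).trans_le (hF i (j + 1) ((hc i j).2 hG))

lemma IsSkewRows.of_inDiag_succ_iff (hF : IsSkewRows F)
    (hG : ∀ i < G.length, 0 < (rowOf G i).2) : IsSkewRows G := by
  have hrow : ∀ i < G.length, (rowOf G i).1 = (rowOf F i).1 - 1 ∧
      (rowOf G i).1 + (rowOf G i).2 + 1 = (rowOf F i).1 + (rowOf F i).2 ∧ i < F.length :=
    fun i hi => by
      have hin : InDiag G i (rowOf G i).1 := ⟨hi, le_rfl, by have := hG i hi; omega⟩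
      exact ⟨(rowOf_of_inDiag_succ_iff (hc i) hin).1, (rowOf_of_inDiag_succ_iff (hc i) hin).2,
        ((hc i _).2 hin).1⟩
  refine isSkewRows_iff.2 ⟨hG, fun i hi => ?_⟩
  have h₁ := hrow i (by omega)
  have h₂ := hrow (i + 1) hi
  have := (isSkewRows_iff.1 hF).2 i h₂.2.2
  omega

lemma inDiag_set_succ_iff {r s L : ℕ} (hrF : r < F.length) (hrG : r < G.length) (i j : ℕ) :
    InDiag (F.set r (s + 1, L)) i (j + 1) ↔ InDiag (G.set r (s, L)) i j := by
  rcases eq_or_ne i r with rfl | hir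
  · rw [inDiag_set_self hrF, inDiag_set_self hrG]; omega
  · rw [inDiag_set_of_ne hir, inDiag_set_of_ne hir, hc]

end ColumnShift

section addCol

variable {m h : ℕ} {D : List (ℕ × ℕ)}

lemma length_addCol : (addCol m h D).length = max D.length (h + m) := by
  simp [addCol]

lemma rowOf_addCol {i : ℕ} (hi : i < max D.length (h + m)) :
    rowOf (addCol m h D) i =
      if h ≤ i ∧ i < h + m then
        if i < D.length then (0, (rowOf D i).1 + (rowOf D i).2 + 1) else (0, 1)
      else ((rowOf D i).1 + 1, (rowOf D i).2) := by
  rw [rowOf_eq_getElem (by rwa [length_addCol])]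
  simp only [addCol, List.getElem_map, List.getElem_range]

lemma inDiag_addCol_zero {i : ℕ} : InDiag (addCol m h D) i 0 ↔ h ≤ i ∧ i < h + m := by
  simp only [InDiag, length_addCol]
  by_cases hi : i < max D.length (h + m)
  · rw [rowOf_addCol hi]
    split_ifs <;> simp <;> omega
  · omega

/-- The first clause of `ColValid`. -/
def RowsFlushLeft (m h : ℕ) (D : List (ℕ × ℕ)) : Prop :=
  ∀ i, h ≤ i → i < h + m → i < D.length → (rowOf D i).1 = 0

variable (hz : RowsFlushLeft m h D)
include hz

lemma inDiag_addCol_succ {i j : ℕ} : InDiag (addCol m h D) i (j + 1) ↔ InDiag D i j := by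
  simp only [InDiag, length_addCol]
  by_cases hi : i < max D.length (h + m)
  · have := hz i
    rw [rowOf_addCol hi]
    by_cases hD : i < D.length
    · split_ifs <;> simp <;> omega
    · rw [rowOf_of_length_le (not_lt.1 hD)]
      split_ifs <;> simp
  · omega

lemma inDiag_addCol_of_inDiag {i j : ℕ} (hi : h ≤ i) (hi' : i < h + m) (hD : InDiag D i j) :
    InDiag (addCol m h D) i j := by
  obtain ⟨h₁, h₂, h₃⟩ := hD
  have hmax : i < max D.length (h + m) := by omega
  refine ⟨by rwa [length_addCol], ?_⟩
  rw [rowOf_addCol hmax, if_pos ⟨hi, hi'⟩, if_pos h₁, hz i hi hi' h₁]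
  simp only [hz i hi hi' h₁] at h₃
  omega

lemma hookLen_addCol_zero {i : ℕ} (hi : h ≤ i) (hi' : i < h + m) :
    hookLen (addCol m h D) i 0 = (rowOf D i).2 + (h + m - i) := by
  have hleg : legLen (addCol m h D) i 0 = h + m - (i + 1) :=
    legLen_eq_sub fun i' => by rw [inDiag_addCol_zero]; omega
  have harm : armLen (addCol m h D) i 0 = (rowOf D i).2 := by
    rw [armLen, rowOf_addCol (by omega), if_pos ⟨hi, hi'⟩]
    split_ifs with hD
    · simp [hz i hi hi' hD]
    · simp [rowOf_of_length_le (not_lt.1 hD)]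
  rw [hookLen, hleg, harm]
  omega

lemma isSkewRows_addCol (hD : IsSkewRows D) (hh : h ≤ D.length) (hn : D.length ≤ h + m) :
    IsSkewRows (addCol m h D) := by
  rw [isSkewRows_iff] at hD ⊢
  simp only [length_addCol]
  refine ⟨fun i hi => ?_, fun i hi => ?_⟩
  · have := hD.1 i
    rw [rowOf_addCol hi]
    split_ifs <;> simp only <;> omega
  · have := hD.1 i
    have := hD.2 i
    have := hz i
    have := hz (i + 1)
    rw [rowOf_addCol hi, rowOf_addCol (by omega)]
    rcases lt_or_ge (i + 1) D.length with hi₁ | hi₁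
    · split_ifs <;> simp <;> omega
    · rw [rowOf_of_length_le hi₁]
      split_ifs <;> simp <;> omega

lemma hookBounded_addCol {k : ℕ} (hD : HookBounded k D)
    (hcol : ∀ i, h ≤ i → i < h + m → (rowOf D i).2 + (h + m - i) ≤ k) :
    HookBounded k (addCol m h D) := by
  intro i j hij
  cases j with
  | zero =>
    obtain ⟨hi, hi'⟩ := inDiag_addCol_zero.1 hij
    rw [hookLen_addCol_zero hz hi hi']
    exact hcol i hi hi'
  | succ j =>
    have hc : ∀ i j, InDiag (addCol m h D) i (j + 1) ↔ InDiag D i j :=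
      fun _ _ => inDiag_addCol_succ hz
    rw [← hookLen_eq_of_inDiag_succ_iff hc ((hc i j).1 hij)]
    exact hD i j ((hc i j).1 hij)

end addCol

lemma ColValid.bounds {k m h : ℕ} {D : List (ℕ × ℕ)} (hm : 0 < m) (hv : ColValid k m h D) :
    h ≤ D.length ∧ D.length ≤ h + m := by
  obtain ⟨hz, hsk, -⟩ := hv
  rw [isSkewRows_iff, length_addCol] at hsk
  constructor
  · by_contra! hh
    have := hsk.1 D.length (by omega)
    rw [rowOf_addCol (by omega), if_neg (by omega), rowOf_of_length_le le_rfl] at this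
    exact this.false
  · by_contra! hn
    have := hsk.2 (h + m - 1) (by omega)
    rw [rowOf_addCol (by omega), rowOf_addCol (by omega), Nat.sub_add_cancel (by omega),
      if_neg (by omega), if_pos (by omega), if_pos (by omega)] at this
    simp at this

lemma colValid_length {k m : ℕ} {D : List (ℕ × ℕ)} (hD : IsSkewRows D) (hDb : HookBounded k D)
    (hmk : m ≤ k) : ColValid k m D.length D := by
  have hz : RowsFlushLeft m D.length D := fun i hi _ hi' => absurd hi' (not_lt.2 hi)
  refine ⟨hz, isSkewRows_addCol hz hD le_rfl (by omega), hookBounded_addCol hz hDb ?_⟩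
  intro i hi _
  rw [rowOf_of_length_le hi]
  omega

lemma colValid_sInf {k m : ℕ} {D : List (ℕ × ℕ)} (hD : IsSkewRows D) (hDb : HookBounded k D)
    (hmk : m ≤ k) : ColValid k m (sInf {h | ColValid k m h D}) D :=
  Nat.sInf_mem (s := {h | ColValid k m h D}) ⟨_, colValid_length hD hDb hmk⟩

namespace IsKBoundedPartition

variable {k m : ℕ} {l : List ℕ}

lemma tail (hl : IsKBoundedPartition k (m :: l)) : IsKBoundedPartition k l :=
  ⟨⟨hl.1.1.of_cons, fun x hx => hl.1.2 x (List.mem_cons_of_mem m hx)⟩,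
    fun x hx => hl.2 x (List.mem_cons_of_mem m hx)⟩

lemma head_pos (hl : IsKBoundedPartition k (m :: l)) : 0 < m :=
  hl.1.2 m List.mem_cons_self

lemma head_le (hl : IsKBoundedPartition k (m :: l)) : m ≤ k :=
  hl.2 m List.mem_cons_self

lemma le_head (hl : IsKBoundedPartition k (m :: l)) : ∀ x ∈ l, x ≤ m :=
  fun x hx => (List.pairwise_cons.1 hl.1.1).1 x hx

theorem isSkewRows_hookBounded (hl : IsKBoundedPartition k l) :
    IsSkewRows (kSkewDiagram k l) ∧ HookBounded k (kSkewDiagram k l) := by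
  induction l with
  | nil =>
    exact ⟨⟨by simp [kSkewDiagram], List.isChain_nil⟩,
      fun i j hij => by simp [kSkewDiagram, InDiag] at hij⟩
  | cons m l ih =>
    obtain ⟨hD, hDb⟩ := ih hl.tail
    have hv := colValid_sInf hD hDb hl.head_le
    exact ⟨hv.2.1, hv.2.2⟩

lemma length_le_of_inDiag_zero (hl : IsKBoundedPartition k l) (hm : ∀ x ∈ l, x ≤ m) {i : ℕ}
    (hi : InDiag (kSkewDiagram k l) i 0) : (kSkewDiagram k l).length ≤ i + m := by
  cases l with
  | nil => simp [kSkewDiagram, InDiag] at hi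
  | cons m' l =>
    obtain ⟨hD, hDb⟩ := hl.tail.isSkewRows_hookBounded
    have hv := colValid_sInf hD hDb hl.head_le
    have hb := hv.bounds hl.head_pos
    have hin := inDiag_addCol_zero.1 hi
    have := hm m' List.mem_cons_self
    change (addCol m' _ _).length ≤ i + m
    rw [length_addCol]
    omega

end IsKBoundedPartition

def shiftRow (D : List (ℕ × ℕ)) (r s : ℕ) : List (ℕ × ℕ) := D.set r (s, (rowOf D r).2)

section addColShift

variable {k m h : ℕ} {D : List (ℕ × ℕ)}

lemma rowOf_addCol_of_lt (hh : h ≤ D.length) {r : ℕ} (hr : r < h) :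
    rowOf (addCol m h D) r = ((rowOf D r).1 + 1, (rowOf D r).2) := by
  rw [rowOf_addCol (by omega), if_neg (by omega)]

lemma lt_of_lt_rowOf_addCol_fst (hn : D.length ≤ h + m) {r s : ℕ}
    (hs : s < (rowOf (addCol m h D) r).1) : r < h := by
  have hr := lt_length_of_lt_rowOf_fst hs
  rw [length_addCol] at hr
  by_contra! hrh
  have := (inDiag_addCol_zero (D := D) (m := m)).2 ⟨hrh, by omega⟩
  exact absurd this.2.1 (by omega)

lemma isSkewRows_and_hookBounded_shiftRow_of_addCol_succ (hz : RowsFlushLeft m h D)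
    (hD : IsSkewRows D) (hh : h ≤ D.length) {r s : ℕ} (hr : r < h) (hsk : IsSkewRows (shiftRow (addCol m h D) r (s + 1)))
    (hb : HookBounded k (shiftRow (addCol m h D) r (s + 1))) :
    IsSkewRows (shiftRow D r s) ∧ HookBounded k (shiftRow D r s) := by
  have hc := inDiag_set_succ_iff (fun _ _ => inDiag_addCol_succ hz) (s := s)
    (L := (rowOf D r).2) (by rw [length_addCol]; omega) (by omega : r < D.length)
  rw [shiftRow, rowOf_addCol_of_lt hh hr] at hsk hb
  refine ⟨hsk.of_inDiag_succ_iff hc fun i hi => ?_, hb.of_inDiag_succ_iff hc⟩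
  rw [shiftRow, List.length_set] at hi
  rw [shiftRow]
  rcases eq_or_ne i r with rfl | hir
  · rw [rowOf_set_self hi]; exact hD.pos hi
  · rw [rowOf_set_of_ne hir]; exact hD.pos hi

lemma eq_succ_of_isSkewRows_shiftRow_addCol_zero (hh : h ≤ D.length) {r : ℕ} (hr : r < h)
    (hsk : IsSkewRows (shiftRow (addCol m h D) r 0)) : h = r + 1 := by
  by_contra hne
  have hlen : r + 1 < (addCol m h D).length := by rw [length_addCol]; omega
  have := ((isSkewRows_iff.1 hsk).2 r (by rwa [shiftRow, List.length_set])).1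
  rw [shiftRow, rowOf_set_self (by omega), rowOf_set_of_ne (by omega),
    rowOf_addCol_of_lt hh (by omega)] at this
  simp at this

lemma add_le_of_hookBounded_shiftRow_addCol_zero (hD : IsSkewRows D) {r : ℕ}
    (hr : r < D.length) (hb : HookBounded k (shiftRow (addCol m (r + 1) D) r 0)) :
    (rowOf D r).2 + m ≤ k := by
  have hrF : r < (addCol m (r + 1) D).length := by rw [length_addCol]; omega
  have hrow : rowOf (shiftRow (addCol m (r + 1) D) r 0) r = (0, (rowOf D r).2) := by
    rw [shiftRow, rowOf_set_self hrF, rowOf_addCol_of_lt hr (lt_add_one r)]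
  have hleg : legLen (shiftRow (addCol m (r + 1) D) r 0) r 0 = r + 1 + m - (r + 1) :=
    legLen_eq_sub fun i => by
      rcases eq_or_ne i r with rfl | hir
      · simp
      · rw [shiftRow, inDiag_set_of_ne hir, inDiag_addCol_zero]; omega
  have hL := hD.pos hr
  have := hb r 0 ⟨by rwa [shiftRow, List.length_set], by rw [hrow], by rw [hrow]; simpa⟩
  rw [hookLen, armLen, hleg, hrow] at this
  simp only at this
  omega

lemma colValid_of_colValid_succ {r : ℕ} (hv : ColValid k m (r + 1) D)
    (hD : IsSkewRows D) (hDb : HookBounded k D) (hr : r < D.length) (hc : (rowOf D r).1 = 0)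
    (hn : D.length ≤ r + m) (hk : (rowOf D r).2 + m ≤ k) : ColValid k m r D := by
  have hz : RowsFlushLeft m r D := fun i hi hi' hin => by
    rcases hi.eq_or_lt with rfl | hi
    · exact hc
    · exact hv.1 i hi (by omega) hin
  refine ⟨hz, isSkewRows_addCol hz hD hr.le hn, hookBounded_addCol hz hDb fun i hi hi' => ?_⟩
  rcases hi.eq_or_lt with rfl | hi
  · simpa using hk
  · have := hv.2.2 i 0 (inDiag_addCol_zero.2 ⟨hi, by omega⟩)
    rw [hookLen_addCol_zero hv.1 hi (by omega)] at this
    omega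

lemma isSkewRows_shiftRow_zero_of_addCol {r : ℕ} (hz : RowsFlushLeft m (r + 1) D)
    (hD : IsSkewRows D) (hr : r < D.length) (hn : D.length ≤ r + 1 + m)
    (hsk : IsSkewRows (shiftRow (addCol m (r + 1) D) r 0)) : IsSkewRows (shiftRow D r 0) := by
  refine hD.set (hD.pos hr) (fun hr₀ => ?_) (fun hr₁ => ?_)
  · have := (isSkewRows_iff.1 hD).2 (r - 1) (by omega)
    rw [Nat.sub_add_cancel hr₀] at this
    simp only
    omega
  · have hz₁ := hz (r + 1) le_rfl (by omega) hr₁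
    have := (isSkewRows_iff.1 hsk).2 r (by rw [shiftRow, List.length_set, length_addCol]; omega)
    rw [shiftRow, rowOf_set_self (by rw [length_addCol]; omega), rowOf_set_of_ne (by omega),
      rowOf_addCol_of_lt hr (lt_add_one r), rowOf_addCol (i := r + 1) (by omega),
      if_pos ⟨le_rfl, by omega⟩, if_pos hr₁, hz₁] at this
    simp only at this ⊢
    omega

lemma hookBounded_shiftRow_zero_of_addCol {r : ℕ} (hz : RowsFlushLeft m (r + 1) D)
    (hD : IsSkewRows D) (hDb : HookBounded k D) (hn : D.length ≤ r + 1 + m)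
    (hb : HookBounded k (shiftRow (addCol m (r + 1) D) r 0)) : HookBounded k (shiftRow D r 0) := by
  intro i j hij
  -- Below row `r`, the cells of row `i` lie right of the start of row `r` of `D`, so moving
  -- row `r` to column `0` only shortens legs; row `r` itself is compared with the shifted
  -- `addCol m (r + 1) D`, whose rows above `r` contain those of `D`.
  rcases lt_trichotomy i r with hi | rfl | hi
  · have hin : InDiag D i j := (inDiag_set_of_ne hi.ne).1 hij
    have harm : armLen (shiftRow D r 0) i j = armLen D i j := by
      rw [armLen, armLen, shiftRow, rowOf_set_of_ne hi.ne]
    have hleg : legLen (shiftRow D r 0) i j ≤ legLen D i j :=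
      legLen_le_legLen fun i' hi' hE => ⟨hi', by
        rcases eq_or_ne i' r with rfl | hir
        · have hr := hE.1
          rw [shiftRow, List.length_set] at hr
          have := (inDiag_set_self hr).1 hE
          have := hD.antitone hi.le hr
          have := hin.2.1
          exact ⟨hr, by omega, by omega⟩
        · exact (inDiag_set_of_ne hir).1 hE⟩
    exact le_trans (by rw [hookLen, hookLen, harm]; omega) (hDb i j hin)
  · have hr : i < D.length := by simpa [shiftRow] using hij.1
    have hrF : i < (addCol m (i + 1) D).length := by rw [length_addCol]; omega
    have hrow : rowOf (shiftRow (addCol m (i + 1) D) i 0) i = rowOf (shiftRow D i 0) i := by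
      rw [shiftRow, shiftRow, rowOf_set_self hrF, rowOf_set_self hr,
        rowOf_addCol_of_lt hr (lt_add_one i)]
    have hleg : legLen (shiftRow D i 0) i j ≤ legLen (shiftRow (addCol m (i + 1) D) i 0) i j :=
      legLen_le_legLen fun i' hi' hE => ⟨hi', by
        rw [shiftRow, inDiag_set_of_ne hi'.ne'] at hE ⊢
        exact inDiag_addCol_of_inDiag hz hi' (by have := hE.1; omega) hE⟩
    have hin : InDiag (shiftRow (addCol m (i + 1) D) i 0) i j := by
      obtain ⟨-, h₁, h₂⟩ := hij
      exact ⟨by rwa [shiftRow, List.length_set], by rwa [hrow], by rwa [hrow]⟩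
    refine le_trans ?_ (hb i j hin)
    rw [hookLen, hookLen, armLen, armLen, hrow]
    omega
  · rw [shiftRow, hookLen_set_of_lt hi]
    exact hDb i j ((inDiag_set_of_ne hi.ne').1 hij)

theorem shiftRow_addCol_cases (hv : ColValid k m h D) (hm : 0 < m)
    (hD : IsSkewRows D) (hDb : HookBounded k D) (hcol : ∀ i, InDiag D i 0 → D.length ≤ i + m)
    {r s : ℕ} (hs : s < (rowOf (addCol m h D) r).1)
    (hsk : IsSkewRows (shiftRow (addCol m h D) r s))
    (hb : HookBounded k (shiftRow (addCol m h D) r s)) :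
    (∃ s' < (rowOf D r).1, IsSkewRows (shiftRow D r s') ∧ HookBounded k (shiftRow D r s')) ∨
      ∃ h' < h, ColValid k m h' D := by
  obtain ⟨hh, hn⟩ := hv.bounds hm
  have hr : r < h := lt_of_lt_rowOf_addCol_fst hn hs
  rw [rowOf_addCol_of_lt hh hr] at hs
  cases s with
  | succ s =>
    exact Or.inl ⟨s, by omega,
      isSkewRows_and_hookBounded_shiftRow_of_addCol_succ hv.1 hD hh hr hsk hb⟩
  | zero =>
    obtain rfl := eq_succ_of_isSkewRows_shiftRow_addCol_zero hh hr hsk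
    have hk := add_le_of_hookBounded_shiftRow_addCol_zero hD hh hb
    rcases Nat.eq_zero_or_pos (rowOf D r).1 with hc | hc
    · have hrow : InDiag D r 0 := ⟨hh, by omega, by have := hD.pos hh; omega⟩
      exact Or.inr ⟨r, lt_add_one r,
        colValid_of_colValid_succ hv hD hDb hh hc (hcol r hrow) hk⟩
    · exact Or.inl ⟨0, hc, isSkewRows_shiftRow_zero_of_addCol hv.1 hD hh hn hsk,
        hookBounded_shiftRow_zero_of_addCol hv.1 hD hDb hn hb⟩

end addColShift

theorem IsKBoundedPartition.not_hookBounded_shiftRow {k : ℕ} {l : List ℕ}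
    (hl : IsKBoundedPartition k l) {r s : ℕ} (hs : s < (rowOf (kSkewDiagram k l) r).1)
    (hsk : IsSkewRows (shiftRow (kSkewDiagram k l) r s)) :
    ¬ HookBounded k (shiftRow (kSkewDiagram k l) r s) := by
  induction l generalizing s with
  | nil => simp [kSkewDiagram, rowOf] at hs
  | cons m l ih =>
    obtain ⟨hD, hDb⟩ := hl.tail.isSkewRows_hookBounded
    intro hb
    rcases shiftRow_addCol_cases (colValid_sInf hD hDb hl.head_le) hl.head_pos hD hDb
        (fun _ => hl.tail.length_le_of_inDiag_zero hl.le_head) hs hsk hb with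
      ⟨s', hs', hsk', hb'⟩ | ⟨h', hh', hv'⟩
    · exact ih hl.tail hs' hsk' hb'
    · exact Nat.notMem_of_lt_sInf hh' hv'

theorem shift_row_not_hookBounded_general (k : ℕ) (l : List ℕ)
    (hl : IsKBoundedPartition k l)
    (r : ℕ)
    (s' : ℕ) (hs : s' < (rowOf (kSkewDiagram k l) r).1)
    (D' : List (ℕ × ℕ))
    (hD' : D' = (kSkewDiagram k l).set r (s', (rowOf (kSkewDiagram k l) r).2))
    (hskew : IsSkewRows D') :
    ¬ HookBounded k D' := by
  subst hD'
  exact hl.not_hookBounded_shiftRow hs hskew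

/-- Let `λ` be a `k`-bounded partition and `D = D(λ)`.  If `D'` is a
skew diagram obtained from `D` by shifting one of its rows to the left (keeping
its length), and the number of columns of `D'` is not more than the number of
columns of `D`, then `D'` has a cell of hook-length strictly greater than `k`. -/
theorem shift_row_not_hookBounded (k : ℕ) (hk : 0 < k) (l : List ℕ)
    (hl : IsKBoundedPartition k l)
    (r : ℕ) (hr : r < (kSkewDiagram k l).length)
    (s' : ℕ) (hs : s' < (rowOf (kSkewDiagram k l) r).1)
    (D' : List (ℕ × ℕ))
    (hD' : D' = (kSkewDiagram k l).set r (s', (rowOf (kSkewDiagram k l) r).2))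
    (hskew : IsSkewRows D')
    (hcols : (colsOf D').card ≤ (colsOf (kSkewDiagram k l)).card) :
    ¬ HookBounded k D' :=
  shift_row_not_hookBounded_general k l hl r s' hs D' hD' hskew
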